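/- For sub-normalized states ρ, σ, σ' on a finite-dimensional Hilbert space, |F(ρ,σ) - F(ρ,σ')| ≤ 2|√F(ρ,σ) - √F(ρ,σ')| ≤ 2√‖σ - σ'‖₁. -/

import Mathlib

open Matrix
open scoped ComplexOrder Classical

/-- The old Mathlib `Matrix.PosSemidef.sqrt` (removed since), with its original definition. -/
noncomputable def posSemidefSqrt {n : Type*} [Fintype n] [DecidableEq n] {A : Matrix n n ℂ}
    (hA : A.PosSemidef) : Matrix n n ℂ :=
  hA.1.eigenvectorUnitary.1 * diagonal ((↑) ∘ (√·) ∘ hA.1.eigenvalues) *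
    (star hA.1.eigenvectorUnitary : Matrix n n ℂ)

/-- The trace norm `‖X‖₁ = Tr √(XᴴX)` of a complex matrix. -/
noncomputable def traceNorm {n : Type*} [Fintype n] [DecidableEq n] (X : Matrix n n ℂ) : ℝ :=
  ((posSemidefSqrt (Matrix.posSemidef_conjTranspose_mul_self X)).trace).re

/-- The positive semidefinite square root, extended by `0` off the PSD cone. -/
noncomputable def msqrt {n : Type*} [Fintype n] [DecidableEq n] (X : Matrix n n ℂ) : Matrix n n ℂ :=
  if h : X.PosSemidef then posSemidefSqrt h else 0

/-- The fidelity `F(ρ,σ) = ‖√ρ √σ‖₁²`. -/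
noncomputable def fidelity {n : Type*} [Fintype n] [DecidableEq n] (ρ σ : Matrix n n ℂ) : ℝ :=
  (traceNorm (msqrt ρ * msqrt σ)) ^ 2

/-!
By Hölder's inequality `‖AB‖₁ ≤ ‖A‖₂ ‖B‖₂`, `√F(ρ,σ) = ‖√ρ √σ‖₁ ≤ √(Tr ρ) √(Tr σ) ≤ 1`, so the
first inequality is `|a² - b²| = (a + b) |a - b| ≤ 2 |a - b|`. For the second, the reverse
triangle inequality for `‖·‖₁` and Hölder give
`|√F(ρ,σ) - √F(ρ,σ')| ≤ ‖√ρ (√σ - √σ')‖₁ ≤ ‖√σ - √σ'‖₂`, and the Powers–Størmer inequality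
`‖A - B‖₂² ≤ ‖A² - B²‖₁` for `A, B ≥ 0` finishes the proof.

Both facts about `‖·‖₁` come from its variational form `‖X‖₁ = max {Re Tr (W X) : W Wᴴ ≤ 1}`,
the maximum being attained at `W = |X|⁻¹ Xᴴ`. Powers–Størmer follows by testing it with
`W = sign (A - B)`: writing `A - B = P - N` with `P, N ≥ 0` its positive and negative parts,
`Re Tr (W (A² - B²)) = Tr ((P + N) (A + B)) = Tr ((A - B)²) + 2 Tr (P B) + 2 Tr (N A)`.
-/

namespace Matrix.IsHermitian

variable {𝕜 n : Type*} [RCLike 𝕜] [Fintype n] [DecidableEq n] {A : Matrix n n 𝕜}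
  (hA : A.IsHermitian)

lemma cfc_congr {f g : ℝ → ℝ} (h : ∀ i, f (hA.eigenvalues i) = g (hA.eigenvalues i)) :
    hA.cfc f = hA.cfc g := by
  simp only [IsHermitian.cfc, Function.comp_def, h]

lemma cfc_id : hA.cfc id = A := hA.spectral_theorem.symm

lemma cfc_one : hA.cfc 1 = 1 := by
  simp [IsHermitian.cfc, Function.comp_def]

lemma cfc_mul (f g : ℝ → ℝ) : hA.cfc (f * g) = hA.cfc f * hA.cfc g := by
  rw [IsHermitian.cfc, IsHermitian.cfc, IsHermitian.cfc, ← map_mul, diagonal_mul_diagonal]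
  simp [Function.comp_def]

lemma cfc_add (f g : ℝ → ℝ) : hA.cfc (f + g) = hA.cfc f + hA.cfc g := by
  rw [IsHermitian.cfc, IsHermitian.cfc, IsHermitian.cfc, ← map_add, diagonal_add]
  simp [Function.comp_def]

lemma cfc_sub (f g : ℝ → ℝ) : hA.cfc (f - g) = hA.cfc f - hA.cfc g := by
  rw [IsHermitian.cfc, IsHermitian.cfc, IsHermitian.cfc, ← map_sub, diagonal_sub]
  simp [Function.comp_def]

lemma isHermitian_cfc (f : ℝ → ℝ) : (hA.cfc f).IsHermitian := by
  rw [← hA.cfc_eq]; exact cfc_predicate f A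

lemma posSemidef_cfc {f : ℝ → ℝ} (hf : ∀ i, 0 ≤ f (hA.eigenvalues i)) :
    (hA.cfc f).PosSemidef := by
  rw [IsHermitian.cfc, Unitary.conjStarAlgAut_apply, star_eq_conjTranspose]
  exact (posSemidef_diagonal_iff.mpr fun i => by simpa using hf i).mul_mul_conjTranspose_same _

lemma commute_cfc (f : ℝ → ℝ) : Commute A (hA.cfc f) := by
  have h : Commute (hA.cfc id) (hA.cfc f) := by
    rw [Commute, SemiconjBy, ← cfc_mul, ← cfc_mul, mul_comm]
  rwa [hA.cfc_id] at h

lemma trace_cfc (f : ℝ → ℝ) : (hA.cfc f).trace = ∑ i, (f (hA.eigenvalues i) : 𝕜) := by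
  rw [IsHermitian.cfc, Unitary.conjStarAlgAut_apply, trace_mul_cycle, Unitary.coe_star_mul_self,
    one_mul, trace_diagonal]
  rfl

end Matrix.IsHermitian

section EuclideanVectors

variable {𝕜 n : Type*} [RCLike 𝕜] [Fintype n]
open WithLp

lemma sq_norm_toLp_eq_re_star_dotProduct (a : n → 𝕜) :
    ‖toLp 2 a‖ ^ 2 = RCLike.re (star a ⬝ᵥ a) := by
  rw [@norm_sq_eq_re_inner 𝕜, EuclideanSpace.inner_toLp_toLp, dotProduct_comm]

lemma re_star_dotProduct_le_norm_mul_norm (a b : n → 𝕜) :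
    RCLike.re (star a ⬝ᵥ b) ≤ ‖toLp 2 a‖ * ‖toLp 2 b‖ := by
  rw [dotProduct_comm, ← EuclideanSpace.inner_toLp_toLp]
  exact re_inner_le_norm _ _

lemma sq_norm_toLp_mulVec (M : Matrix n n 𝕜) (v : n → 𝕜) :
    ‖toLp 2 (M *ᵥ v)‖ ^ 2 = RCLike.re (star v ⬝ᵥ (Mᴴ * M) *ᵥ v) := by
  rw [sq_norm_toLp_eq_re_star_dotProduct, ← mulVec_mulVec, dotProduct_mulVec (star v),
    star_mulVec]

variable [DecidableEq n]

lemma norm_toLp_conjTranspose_mulVec_le {W : Matrix n n 𝕜} (hW : (1 - W * Wᴴ).PosSemidef)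
    (v : n → 𝕜) : ‖toLp 2 (Wᴴ *ᵥ v)‖ ≤ ‖toLp 2 v‖ := by
  have h := (RCLike.nonneg_iff.mp (hW.dotProduct_mulVec_nonneg v)).1
  rw [sub_mulVec, one_mulVec, dotProduct_sub, map_sub, sub_nonneg] at h
  rwa [← pow_le_pow_iff_left₀ (norm_nonneg _) (norm_nonneg _) two_ne_zero, sq_norm_toLp_mulVec,
    conjTranspose_conjTranspose, sq_norm_toLp_eq_re_star_dotProduct]

lemma trace_eq_sum_star_dotProduct_mulVec {U : Matrix n n 𝕜} (hU : U ∈ unitaryGroup n 𝕜)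
    (M : Matrix n n 𝕜) : M.trace = ∑ i, star (Uᵀ i) ⬝ᵥ (M *ᵥ Uᵀ i) := by
  conv_lhs =>
    rw [← one_mul M, ← mem_unitaryGroup_iff.mp hU, mul_assoc, trace_mul_comm, mul_assoc]
  simp [trace, mul_apply, dotProduct, mulVec, Finset.mul_sum]

end EuclideanVectors

section SquareRoot

variable {n : Type*} [Fintype n] [DecidableEq n]

lemma posSemidefSqrt_eq_cfc {A : Matrix n n ℂ} (hA : A.PosSemidef) :
    posSemidefSqrt hA = hA.1.cfc Real.sqrt := rfl

lemma msqrt_eq_posSemidefSqrt {A : Matrix n n ℂ} (hA : A.PosSemidef) :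
    msqrt A = posSemidefSqrt hA :=
  dif_pos hA

lemma Matrix.PosSemidef.posSemidef_posSemidefSqrt {A : Matrix n n ℂ} (hA : A.PosSemidef) :
    (posSemidefSqrt hA).PosSemidef :=
  hA.1.posSemidef_cfc fun _ => Real.sqrt_nonneg _

lemma Matrix.PosSemidef.posSemidefSqrt_mul_self {A : Matrix n n ℂ} (hA : A.PosSemidef) :
    posSemidefSqrt hA * posSemidefSqrt hA = A := by
  conv_rhs => rw [← hA.1.cfc_id]
  rw [posSemidefSqrt_eq_cfc, ← IsHermitian.cfc_mul]
  exact hA.1.cfc_congr fun i => Real.mul_self_sqrt (hA.eigenvalues_nonneg i)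

lemma re_trace_conjTranspose_mul_self_posSemidefSqrt {A : Matrix n n ℂ} (hA : A.PosSemidef) :
    ((posSemidefSqrt hA)ᴴ * posSemidefSqrt hA).trace.re = A.trace.re := by
  rw [hA.posSemidef_posSemidefSqrt.1.eq, hA.posSemidefSqrt_mul_self]

lemma Matrix.PosSemidef.trace_mul_nonneg {A B : Matrix n n ℂ} (hA : A.PosSemidef)
    (hB : B.PosSemidef) : 0 ≤ (A * B).trace := by
  set R := posSemidefSqrt hA
  have hAB : (R * B * Rᴴ).trace = (A * B).trace := by
    rw [hA.posSemidef_posSemidefSqrt.1.eq, mul_assoc, trace_mul_comm, mul_assoc,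
      hA.posSemidefSqrt_mul_self, trace_mul_comm]
  rw [← hAB]
  exact (hB.mul_mul_conjTranspose_same _).trace_nonneg

end SquareRoot

section TraceNorm

variable {n : Type*} [Fintype n] [DecidableEq n]
open WithLp

lemma traceNorm_eq_sum_sqrt_eigenvalues (X : Matrix n n ℂ) :
    traceNorm X = ∑ i, √((posSemidef_conjTranspose_mul_self X).1.eigenvalues i) := by
  rw [traceNorm, posSemidefSqrt_eq_cfc, IsHermitian.trace_cfc, Complex.re_sum]
  rfl

lemma traceNorm_nonneg (X : Matrix n n ℂ) : 0 ≤ traceNorm X := by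
  rw [traceNorm_eq_sum_sqrt_eigenvalues]
  positivity

lemma traceNorm_eq_re_trace_cfc_sqrt (X : Matrix n n ℂ) :
    traceNorm X = (cfc Real.sqrt (Xᴴ * X)).trace.re := by
  rw [traceNorm, (posSemidef_conjTranspose_mul_self X).1.cfc_eq]; rfl

lemma traceNorm_neg (X : Matrix n n ℂ) : traceNorm (-X) = traceNorm X := by
  simp only [traceNorm_eq_re_trace_cfc_sqrt, conjTranspose_neg, neg_mul_neg]

lemma re_trace_mul_le_traceNorm {W : Matrix n n ℂ} (hW : (1 - W * Wᴴ).PosSemidef)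
    (X : Matrix n n ℂ) : (W * X).trace.re ≤ traceNorm X := by
  set hH := (posSemidef_conjTranspose_mul_self X).1
  rw [trace_eq_sum_star_dotProduct_mulVec hH.eigenvectorUnitary.2, Complex.re_sum,
    traceNorm_eq_sum_sqrt_eigenvalues]
  refine Finset.sum_le_sum fun i _ => ?_
  set v : n → ℂ := (hH.eigenvectorUnitary : Matrix n n ℂ)ᵀ i
  have hv : ‖toLp 2 v‖ = 1 := hH.eigenvectorBasis.orthonormal.1 i
  have hXv : ‖toLp 2 (X *ᵥ v)‖ = √(hH.eigenvalues i) := by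
    rw [← Real.sqrt_sq (norm_nonneg _), sq_norm_toLp_mulVec, hH.eigenvalues_eq]
    rfl
  calc (star v ⬝ᵥ (W * X) *ᵥ v).re = (star (Wᴴ *ᵥ v) ⬝ᵥ X *ᵥ v).re := by
        rw [← mulVec_mulVec, dotProduct_mulVec, star_mulVec, conjTranspose_conjTranspose]
    _ ≤ ‖toLp 2 (Wᴴ *ᵥ v)‖ * ‖toLp 2 (X *ᵥ v)‖ :=
          re_star_dotProduct_le_norm_mul_norm (Wᴴ *ᵥ v) (X *ᵥ v)
    _ ≤ 1 * √(hH.eigenvalues i) := by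
        rw [hXv, ← hv]
        gcongr
        exact norm_toLp_conjTranspose_mulVec_le hW v
    _ = √(hH.eigenvalues i) := one_mul _

lemma exists_re_trace_mul_eq_traceNorm (X : Matrix n n ℂ) :
    ∃ W : Matrix n n ℂ, (1 - W * Wᴴ).PosSemidef ∧ (W * X).trace.re = traceNorm X := by
  set hH := (posSemidef_conjTranspose_mul_self X).1
  -- `C` is `|X|⁻¹` on the range of `Xᴴ X` and `0` on its kernel, because `(√0)⁻¹ = 0`.
  set C := hH.cfc fun x => (√x)⁻¹
  have hC : Cᴴ = C := (hH.isHermitian_cfc _).eq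
  refine ⟨C * Xᴴ, ?_, ?_⟩
  · have hWW : C * Xᴴ * (C * Xᴴ)ᴴ = hH.cfc fun x => (√x)⁻¹ * x * (√x)⁻¹ :=
      calc C * Xᴴ * (C * Xᴴ)ᴴ = C * hH.cfc id * C := by
            rw [hH.cfc_id, conjTranspose_mul, conjTranspose_conjTranspose, hC, mul_assoc C,
              mul_assoc C, mul_assoc]
        _ = _ := by simp only [C, ← IsHermitian.cfc_mul]; rfl
    rw [hWW, ← hH.cfc_one, ← IsHermitian.cfc_sub]
    refine hH.posSemidef_cfc fun i => sub_nonneg.mpr ?_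
    set d := hH.eigenvalues i
    calc (√d)⁻¹ * d * (√d)⁻¹ = d / √d / √d := by ring
      _ = √d / √d := by rw [Real.div_sqrt]
      _ ≤ 1 := div_self_le_one _
  · calc (C * Xᴴ * X).trace.re = (C * hH.cfc id).trace.re := by rw [hH.cfc_id, mul_assoc]
      _ = traceNorm X := by
          rw [← IsHermitian.cfc_mul, traceNorm, posSemidefSqrt_eq_cfc]
          congr 3
          funext x
          simp [← div_eq_inv_mul, Real.div_sqrt]

lemma traceNorm_add_le (X Y : Matrix n n ℂ) : traceNorm (X + Y) ≤ traceNorm X + traceNorm Y := by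
  obtain ⟨W, hW, hWXY⟩ := exists_re_trace_mul_eq_traceNorm (X + Y)
  rw [← hWXY, Matrix.mul_add, trace_add, Complex.add_re]
  exact add_le_add (re_trace_mul_le_traceNorm hW X) (re_trace_mul_le_traceNorm hW Y)

lemma abs_traceNorm_sub_traceNorm_le (X Y : Matrix n n ℂ) :
    |traceNorm X - traceNorm Y| ≤ traceNorm (X - Y) := by
  have hXY := traceNorm_add_le (X - Y) Y
  have hYX := traceNorm_add_le (Y - X) X
  rw [sub_add_cancel] at hXY hYX
  rw [← neg_sub, traceNorm_neg] at hYX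
  exact abs_sub_le_iff.mpr ⟨by linarith, by linarith⟩

lemma re_trace_conjTranspose_mul_le (C D : Matrix n n ℂ) :
    (Cᴴ * D).trace.re ≤ √(Cᴴ * C).trace.re * √(Dᴴ * D).trace.re := by
  let _ := toMatrixSeminormedAddCommGroup (1 : Matrix n n ℂ) PosSemidef.one
  let _ := toMatrixInnerProductSpace (1 : Matrix n n ℂ) PosSemidef.one
  have h := re_inner_le_norm (𝕜 := ℂ) Cᴴ Dᴴ
  rw [norm_eq_sqrt_re_inner (𝕜 := ℂ), norm_eq_sqrt_re_inner (𝕜 := ℂ)] at h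
  change (Dᴴ * 1 * Cᴴᴴ).trace.re ≤ √(Cᴴ * 1 * Cᴴᴴ).trace.re * √(Dᴴ * 1 * Dᴴᴴ).trace.re at h
  simp only [Matrix.mul_one, conjTranspose_conjTranspose] at h
  rwa [← conjTranspose_conjTranspose (Dᴴ * C), trace_conjTranspose, conjTranspose_mul,
    conjTranspose_conjTranspose, Complex.star_def, Complex.conj_re] at h

lemma traceNorm_mul_le (A B : Matrix n n ℂ) :
    traceNorm (A * B) ≤ √(Aᴴ * A).trace.re * √(Bᴴ * B).trace.re := by
  obtain ⟨W, hW, hWAB⟩ := exists_re_trace_mul_eq_traceNorm (A * B)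
  have hBW : ((B * W)ᴴ * (B * W)).trace.re ≤ (Bᴴ * B).trace.re := by
    have h := (hW.mul_mul_conjTranspose_same B).trace_nonneg
    rw [Matrix.mul_sub, Matrix.sub_mul, Matrix.mul_one, trace_sub, sub_nonneg] at h
    rw [conjTranspose_mul, trace_mul_comm, trace_mul_comm Bᴴ]
    simpa only [mul_assoc] using (Complex.le_def.mp h).1
  calc traceNorm (A * B) = (Aᴴᴴ * (B * W)).trace.re := by
        rw [← hWAB, conjTranspose_conjTranspose, trace_mul_comm, mul_assoc]
    _ ≤ √(Aᴴᴴ * Aᴴ).trace.re * √((B * W)ᴴ * (B * W)).trace.re :=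
        re_trace_conjTranspose_mul_le _ _
    _ ≤ √(Aᴴ * A).trace.re * √(Bᴴ * B).trace.re := by
        rw [conjTranspose_conjTranspose, trace_mul_comm]
        gcongr

lemma trace_mul_mul_self_sub_mul_self {A B W : Matrix n n ℂ} (hW : Commute W (A - B)) :
    (W * (A * A - B * B)).trace = (W * (A - B) * (A + B)).trace := by
  have h2 : W * (A * A - B * B) + W * (A * A - B * B) =
      W * (A - B) * (A + B) + W * (A + B) * (A - B) := by
    noncomm_ring
  have h3 : (W * (A + B) * (A - B)).trace = (W * (A - B) * (A + B)).trace := by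
    rw [trace_mul_comm, ← mul_assoc, hW.eq]
  have h4 := congrArg trace h2
  rw [trace_add, trace_add, h3] at h4
  linear_combination h4 / 2

lemma re_trace_sub_mul_sub_le_re_trace_add_mul_add {P N A B : Matrix n n ℂ}
    (hP : P.PosSemidef) (hN : N.PosSemidef) (hA : A.PosSemidef) (hB : B.PosSemidef) :
    ((P - N) * (A - B)).trace.re ≤ ((P + N) * (A + B)).trace.re := by
  have h : 0 ≤ ((P + N) * (A + B) - (P - N) * (A - B)).trace := by
    rw [show (P + N) * (A + B) - (P - N) * (A - B) = 2 • (P * B + N * A) by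
      rw [two_smul]; noncomm_ring, trace_smul, trace_add]
    exact nsmul_nonneg (add_nonneg (hP.trace_mul_nonneg hB) (hN.trace_mul_nonneg hA)) 2
  rw [trace_sub] at h
  exact sub_nonneg.mp (Complex.le_def.mp h).1

/-- The Powers–Størmer inequality. -/
lemma re_trace_sub_mul_sub_le_traceNorm {A B : Matrix n n ℂ} (hA : A.PosSemidef)
    (hB : B.PosSemidef) : ((A - B) * (A - B)).trace.re ≤ traceNorm (A * A - B * B) := by
  set hΔ : (A - B).IsHermitian := hA.1.sub hB.1
  set P := hΔ.cfc fun x => x⁺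
  set N := hΔ.cfc fun x => x⁻
  set W := hΔ.cfc fun x => (SignType.sign x : ℝ)
  have hPN : P - N = A - B := by
    rw [← IsHermitian.cfc_sub]
    conv_rhs => rw [← hΔ.cfc_id]
    exact hΔ.cfc_congr fun i => posPart_sub_negPart _
  have hWΔ : W * (A - B) = P + N := by
    calc W * (A - B) = W * hΔ.cfc id := by rw [hΔ.cfc_id]
      _ = P + N := by
        rw [← IsHermitian.cfc_mul, ← IsHermitian.cfc_add]
        exact hΔ.cfc_congr fun i => (sign_mul_self _).trans (posPart_add_negPart _).symm
  have hW : (1 - W * Wᴴ).PosSemidef := by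
    rw [(hΔ.isHermitian_cfc _).eq, ← IsHermitian.cfc_mul, ← hΔ.cfc_one, ← IsHermitian.cfc_sub]
    refine hΔ.posSemidef_cfc fun i => sub_nonneg.mpr ?_
    rcases lt_trichotomy (hΔ.eigenvalues i) 0 with h | h | h <;> simp [h]
  calc ((A - B) * (A - B)).trace.re = ((P - N) * (A - B)).trace.re := by rw [hPN]
    _ ≤ ((P + N) * (A + B)).trace.re :=
        re_trace_sub_mul_sub_le_re_trace_add_mul_add (hΔ.posSemidef_cfc fun _ => posPart_nonneg _)
          (hΔ.posSemidef_cfc fun _ => negPart_nonneg _) hA hB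
    _ = (W * (A * A - B * B)).trace.re := by
        rw [trace_mul_mul_self_sub_mul_self (hΔ.commute_cfc _).symm, hWΔ]
    _ ≤ traceNorm (A * A - B * B) := re_trace_mul_le_traceNorm hW _

lemma re_trace_sq_sub_posSemidefSqrt_le_traceNorm {A B : Matrix n n ℂ} (hA : A.PosSemidef)
    (hB : B.PosSemidef) :
    ((posSemidefSqrt hA - posSemidefSqrt hB)ᴴ * (posSemidefSqrt hA - posSemidefSqrt hB)).trace.re
      ≤ traceNorm (A - B) := by
  have h := re_trace_sub_mul_sub_le_traceNorm hA.posSemidef_posSemidefSqrt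
    hB.posSemidef_posSemidefSqrt
  rw [hA.posSemidefSqrt_mul_self, hB.posSemidefSqrt_mul_self] at h
  rwa [(hA.posSemidef_posSemidefSqrt.1.sub hB.posSemidef_posSemidefSqrt.1).eq]

end TraceNorm

lemma abs_sq_sub_sq_le_two_mul_abs_sub {a b : ℝ} (ha : 0 ≤ a) (hb : 0 ≤ b) (ha1 : a ≤ 1)
    (hb1 : b ≤ 1) : |a ^ 2 - b ^ 2| ≤ 2 * |a - b| := by
  rw [sq_sub_sq, abs_mul, abs_of_nonneg (add_nonneg ha hb)]
  exact mul_le_mul_of_nonneg_right (by linarith) (abs_nonneg _)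

section Fidelity

variable {n : Type*} [Fintype n] [DecidableEq n]

lemma fidelity_nonneg (ρ σ : Matrix n n ℂ) : 0 ≤ fidelity ρ σ := sq_nonneg _

lemma sqrt_fidelity_eq_traceNorm {ρ σ : Matrix n n ℂ} (hρ : ρ.PosSemidef) (hσ : σ.PosSemidef) :
    √(fidelity ρ σ) = traceNorm (posSemidefSqrt hρ * posSemidefSqrt hσ) := by
  rw [fidelity, msqrt_eq_posSemidefSqrt hρ, msqrt_eq_posSemidefSqrt hσ,
    Real.sqrt_sq (traceNorm_nonneg _)]

lemma sqrt_fidelity_le_one {ρ σ : Matrix n n ℂ} (hρ : ρ.PosSemidef) (hσ : σ.PosSemidef)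
    (hρ1 : ρ.trace.re ≤ 1) (hσ1 : σ.trace.re ≤ 1) : √(fidelity ρ σ) ≤ 1 := by
  rw [sqrt_fidelity_eq_traceNorm hρ hσ]
  calc _ ≤ √((posSemidefSqrt hρ)ᴴ * posSemidefSqrt hρ).trace.re *
          √((posSemidefSqrt hσ)ᴴ * posSemidefSqrt hσ).trace.re := traceNorm_mul_le _ _
    _ ≤ 1 * 1 := by
        rw [re_trace_conjTranspose_mul_self_posSemidefSqrt,
          re_trace_conjTranspose_mul_self_posSemidefSqrt]
        gcongr <;> exact Real.sqrt_le_one.mpr ‹_›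
    _ = 1 := one_mul 1

lemma abs_sqrt_fidelity_sub_le {ρ σ σ' : Matrix n n ℂ} (hρ : ρ.PosSemidef) (hσ : σ.PosSemidef)
    (hσ' : σ'.PosSemidef) (hρ1 : ρ.trace.re ≤ 1) :
    |√(fidelity ρ σ) - √(fidelity ρ σ')| ≤ √(traceNorm (σ - σ')) := by
  set R := posSemidefSqrt hρ
  set D := posSemidefSqrt hσ - posSemidefSqrt hσ'
  rw [sqrt_fidelity_eq_traceNorm hρ hσ, sqrt_fidelity_eq_traceNorm hρ hσ']
  calc _ ≤ traceNorm (R * D) := by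
        rw [Matrix.mul_sub]; exact abs_traceNorm_sub_traceNorm_le _ _
    _ ≤ √(Rᴴ * R).trace.re * √(Dᴴ * D).trace.re := traceNorm_mul_le _ _
    _ ≤ 1 * √(traceNorm (σ - σ')) := by
        rw [re_trace_conjTranspose_mul_self_posSemidefSqrt]
        gcongr
        · exact Real.sqrt_le_one.mpr hρ1
        · exact re_trace_sq_sub_posSemidefSqrt_le_traceNorm hσ hσ'
    _ = _ := one_mul _

end Fidelity

/-- Continuity bound for the fidelity in its second argument, for sub-normalized states. -/
theorem fidelity_continuity {n : Type*} [Fintype n] [DecidableEq n]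
    (ρ σ σ' : Matrix n n ℂ) (hρ : ρ.PosSemidef) (hσ : σ.PosSemidef) (hσ' : σ'.PosSemidef)
    (hρ1 : ρ.trace.re ≤ 1) (hσ1 : σ.trace.re ≤ 1) (hσ'1 : σ'.trace.re ≤ 1) :
    |fidelity ρ σ - fidelity ρ σ'| ≤
        2 * |Real.sqrt (fidelity ρ σ) - Real.sqrt (fidelity ρ σ')| ∧
      2 * |Real.sqrt (fidelity ρ σ) - Real.sqrt (fidelity ρ σ')| ≤
        2 * Real.sqrt (traceNorm (σ - σ')) := by
  refine ⟨?_, by linarith [abs_sqrt_fidelity_sub_le hρ hσ hσ' hρ1]⟩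
  have h := abs_sq_sub_sq_le_two_mul_abs_sub (Real.sqrt_nonneg _) (Real.sqrt_nonneg _)
    (sqrt_fidelity_le_one hρ hσ hρ1 hσ1) (sqrt_fidelity_le_one hρ hσ' hρ1 hσ'1)
  rwa [Real.sq_sqrt (fidelity_nonneg _ _), Real.sq_sqrt (fidelity_nonneg _ _)] at h
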